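/- arXiv:1909.04848 — 5 statements merged into one kernel-verified Lean document; each statement's English description precedes it below -/
import Mathlib

section
/- Let A : ℝⁿ ⇉ ℝⁿ be a monotone linear relation, i.e., its graph is a linear subspace and ⟨x − y, x* − y*⟩ ≥ 0 for all graph pairs. Then for every x ∈ dom A, the set ⟨x, A x⟩ = {⟨x, x*⟩ : x* ∈ A x} is a singleton and its value is nonnegative. -/
open scoped RealInnerProductSpace

abbrev Euc (n : ℕ) := EuclideanSpace ℝ (Fin n)

noncomputable def moreauEnv {E : Type*} [NormedAddCommGroup E] [InnerProductSpace ℝ E]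
    (r : ℝ) (f : E → EReal) (x : E) : EReal :=
  ⨅ y : E, f y + ((r / 2 * ‖y - x‖ ^ 2 : ℝ) : EReal)

noncomputable def fenchel {E : Type*} [NormedAddCommGroup E] [InnerProductSpace ℝ E]
    (f : E → EReal) (y : E) : EReal :=
  ⨆ x : E, ((⟪y, x⟫ : ℝ) : EReal) - f x

def ProperFn {E : Type*} (f : E → EReal) : Prop :=
  (∃ x, f x ≠ ⊤) ∧ ∀ x, f x ≠ ⊥

def EConvexFn {E : Type*} [AddCommGroup E] [Module ℝ E] (f : E → EReal) : Prop :=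
  ∀ x y : E, ∀ a b : ℝ, 0 ≤ a → 0 ≤ b → a + b = 1 →
    f (a • x + b • y) ≤ (a : EReal) * f x + (b : EReal) * f y

def SymRel {n : ℕ} (A : Set (Euc n × Euc n)) : Prop :=
  ∀ p ∈ A, ∀ q ∈ A, ⟪p.1, q.2⟫ = ⟪q.1, p.2⟫

def MonoRel {n : ℕ} (A : Set (Euc n × Euc n)) : Prop :=
  ∀ p ∈ A, ∀ q ∈ A, 0 ≤ ⟪p.1 - q.1, p.2 - q.2⟫

def MaxMonoRel {n : ℕ} (A : Set (Euc n × Euc n)) : Prop :=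
  MonoRel A ∧ ∀ p : Euc n × Euc n, (∀ q ∈ A, 0 ≤ ⟪p.1 - q.1, p.2 - q.2⟫) → p ∈ A

noncomputable def qrel {n : ℕ} (A : Set (Euc n × Euc n)) (x : Euc n) : EReal :=
  ⨅ (u : Euc n) (_ : (x, u) ∈ A), ((1 / 2 * ⟪x, u⟫ : ℝ) : EReal)

def esubdiff {E : Type*} [NormedAddCommGroup E] [InnerProductSpace ℝ E]
    (f : E → EReal) (x : E) : Set E :=
  {u | ∀ y, f x + ((⟪u, y - x⟫ : ℝ) : EReal) ≤ f y}

theorem stmt10 {n : ℕ} (A : Submodule ℝ (Euc n × Euc n))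
    (hA : MonoRel (A : Set (Euc n × Euc n))) :
    ∀ x x' : Euc n, (x, x') ∈ A →
      (0 ≤ ⟪x, x'⟫ ∧ ∀ y' : Euc n, (x, y') ∈ A → ⟪x, y'⟫ = ⟪x, x'⟫) := by
  intro x x' hx
  have zero_mem : ((0,0) : Euc n × Euc n) ∈ A := A.zero_mem
  have hpos : ∀ y' : Euc n, (x, y') ∈ A → 0 ≤ ⟪x, y'⟫ := by
    intro y' hy
    have := hA (x, y') hy (0, 0) zero_mem
    simpa using this
  have ha : 0 ≤ ⟪x, x'⟫ := hpos x' hx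
  refine ⟨ha, ?_⟩
  intro y' hy
  have hb : 0 ≤ ⟪x, y'⟫ := hpos y' hy
  set a := ⟪x, x'⟫ with haa
  set b := ⟪x, y'⟫ with hbb
  have key : ∀ t : ℝ, 0 ≤ (1 - t) * (a - t * b) := by
    intro t
    have hmem : (t • ((x, y') : Euc n × Euc n)) ∈ A := A.smul_mem t hy
    have h := hA (x, x') hx (t • (x, y')) hmem
    simp only [Prod.smul_fst, Prod.smul_snd] at h
    have : ⟪x - t • x, x' - t • y'⟫ = (1 - t) * (a - t * b) := by
      rw [haa, hbb, inner_sub_left, inner_sub_right, inner_sub_right, real_inner_smul_left,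
        real_inner_smul_left, real_inner_smul_right]
      rw [real_inner_comm x' x]
      ring
    rw [this] at h
    exact h
  rcases eq_or_lt_of_le hb with hb0 | hb0
  · have h2 := key 2
    have h0 := key 0
    nlinarith
  · have h := key ((a + b) / (2 * b))
    have hb' : (2 : ℝ) * b > 0 := by linarith
    have : (1 - (a + b) / (2 * b)) * (a - (a + b) / (2 * b) * b) = -((a - b)^2) / (4 * b) := by
      field_simp
      ring
    rw [this] at h
    have h4 : (0:ℝ) < 4 * b := by linarith
    rw [le_div_iff₀ h4, zero_mul, neg_nonneg] at h
    have hsq : (a - b)^2 = 0 := le_antisymm h (sq_nonneg _)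
    have : a - b = 0 := by
      have := sq_eq_zero_iff.mp hsq
      exact this
    linarith
end

section
/- Let A : ℝⁿ ⇉ ℝⁿ be a maximally monotone symmetric linear relation, and define q_A(x) = (1/2)⟨x, A x⟩ for x ∈ dom A and q_A(x) = ∞ otherwise. Then the Fenchel conjugate satisfies (q_A)* = q_{A⁻¹}, i.e., (q_A)*(y) = (1/2)⟨y, A⁻¹ y⟩ if y ∈ ran A and ∞ otherwise. -/
open scoped RealInnerProductSpace

/-! Symmetry makes `⟪x, u⟫` independent of the choice of `u ∈ A x`, so `q_A` is the quadratic form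
`½⟪x, u⟫` on `dom A`. If `y ∈ A v`, monotonicity between `(x, u)` and `(v, y)`, combined with the
symmetry identity `⟪v, u⟫ = ⟪x, y⟫`, is the Fenchel–Young inequality `⟪y, x⟫ - q_A x ≤ ½⟪y, v⟫`,
with equality at `x = v`. If `y ∉ ran A`, pick `z ⊥ ran A` with `⟪y, z⟫ ≠ 0`: maximality puts
`(z, 0)` in `A`, so `q_A` vanishes on the line `ℝ z` and the conjugate is `+∞` at `y`. -/

section InnerProductSpace

variable {E : Type*} [NormedAddCommGroup E] [InnerProductSpace ℝ E]

theorem fenchel_eq_top_of_le_zero_on_line {f : E → EReal} {y z : E}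
    (hf : ∀ t : ℝ, f (t • z) ≤ 0) (hyz : ⟪y, z⟫ ≠ 0) : fenchel f y = ⊤ := by
  refine (EReal.eq_top_iff_forall_lt _).2 fun r => ?_
  set t := (r + 1) / ⟪y, z⟫
  calc (r : EReal) < ((⟪y, t • z⟫ : ℝ) : EReal) - 0 := by
        rw [sub_zero, real_inner_smul_right, div_mul_cancel₀ _ hyz]
        exact_mod_cast lt_add_one r
    _ ≤ ((⟪y, t • z⟫ : ℝ) : EReal) - f (t • z) := EReal.sub_le_sub le_rfl (hf t)
    _ ≤ fenchel f y := le_iSup_of_le (t • z) le_rfl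

theorem Submodule.exists_inner_ne_zero_of_notMem {K : Submodule ℝ E} [K.HasOrthogonalProjection]
    {y : E} (hy : y ∉ K) : ∃ z ∈ Kᗮ, ⟪y, z⟫ ≠ 0 := by
  by_contra! h
  exact hy (K.orthogonal_orthogonal ▸ (Submodule.mem_orthogonal' _ _).2 h)

end InnerProductSpace

section LinearRelation

variable {n : ℕ}

theorem qrel_eq_of_mem {S : Set (Euc n × Euc n)} {x u : Euc n} (hu : (x, u) ∈ S)
    (hconst : ∀ u', (x, u') ∈ S → ⟪x, u'⟫ = ⟪x, u⟫) :
    qrel S x = ((1 / 2 * ⟪x, u⟫ : ℝ) : EReal) :=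
  le_antisymm (iInf₂_le u hu) (le_iInf₂ fun u' hu' => by rw [hconst u' hu'])

theorem qrel_eq_top {S : Set (Euc n × Euc n)} {x : Euc n} (hx : ∀ u, (x, u) ∉ S) :
    qrel S x = ⊤ := by
  simp [qrel, hx]

def Submodule.relInv (A : Submodule ℝ (Euc n × Euc n)) : Submodule ℝ (Euc n × Euc n) :=
  A.comap (LinearEquiv.prodComm ℝ (Euc n) (Euc n)).toLinearMap

theorem Submodule.coe_relInv (A : Submodule ℝ (Euc n × Euc n)) :
    (A.relInv : Set (Euc n × Euc n)) = {p | (p.2, p.1) ∈ A} := rfl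

theorem SymRel.relInv {A : Submodule ℝ (Euc n × Euc n)} (hsym : SymRel (A : Set (Euc n × Euc n))) :
    SymRel (A.relInv : Set (Euc n × Euc n)) := fun _ hp _ hq =>
  (real_inner_comm _ _).trans ((hsym _ hp _ hq).symm.trans (real_inner_comm _ _))

variable {A : Submodule ℝ (Euc n × Euc n)}

theorem SymRel.inner_eq_of_mem (hsym : SymRel (A : Set (Euc n × Euc n))) {x u u' : Euc n}
    (hu : (x, u) ∈ A) (hu' : (x, u') ∈ A) : ⟪x, u'⟫ = ⟪x, u⟫ := by
  have hdiff : ((0, u' - u) : Euc n × Euc n) ∈ A := by simpa using A.sub_mem hu' hu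
  have := hsym _ hu _ hdiff
  simp only [inner_zero_left, inner_sub_right] at this
  linarith

theorem SymRel.qrel_eq (hsym : SymRel (A : Set (Euc n × Euc n))) {x u : Euc n}
    (hu : (x, u) ∈ A) : qrel (A : Set (Euc n × Euc n)) x = ((1 / 2 * ⟪x, u⟫ : ℝ) : EReal) :=
  qrel_eq_of_mem hu fun _ hu' => hsym.inner_eq_of_mem hu hu'

theorem MonoRel.inner_nonneg (hmono : MonoRel (A : Set (Euc n × Euc n))) {x u : Euc n}
    (hu : (x, u) ∈ A) : 0 ≤ ⟪x, u⟫ := by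
  simpa using hmono _ hu 0 A.zero_mem

theorem fenchel_young_of_mem (hsym : SymRel (A : Set (Euc n × Euc n)))
    (hmono : MonoRel (A : Set (Euc n × Euc n))) {x u v y : Euc n}
    (hu : (x, u) ∈ A) (hv : (v, y) ∈ A) :
    ⟪y, x⟫ - 1 / 2 * ⟪x, u⟫ ≤ 1 / 2 * ⟪y, v⟫ := by
  have hm := hmono _ hu _ hv
  have hs := hsym _ hv _ hu
  simp only [inner_sub_left, inner_sub_right] at hm hs
  rw [real_inner_comm x y, real_inner_comm v y]
  linarith

theorem fenchel_qrel_eq_of_mem (hsym : SymRel (A : Set (Euc n × Euc n)))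
    (hmono : MonoRel (A : Set (Euc n × Euc n))) {v y : Euc n} (hv : (v, y) ∈ A) :
    fenchel (qrel (A : Set (Euc n × Euc n))) y = ((1 / 2 * ⟪y, v⟫ : ℝ) : EReal) := by
  refine le_antisymm (iSup_le fun x => ?_) (le_iSup_of_le v ?_)
  · by_cases hx : ∃ u, (x, u) ∈ A
    · obtain ⟨u, hu⟩ := hx
      rw [hsym.qrel_eq hu, ← EReal.coe_sub, EReal.coe_le_coe_iff]
      exact fenchel_young_of_mem hsym hmono hu hv
    · rw [qrel_eq_top (not_exists.1 hx)]
      simp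
  · rw [hsym.qrel_eq hv, ← EReal.coe_sub, EReal.coe_le_coe_iff, real_inner_comm v y]
    linarith

theorem MaxMonoRel.mem_of_mem_orthogonal_range (hmax : MaxMonoRel (A : Set (Euc n × Euc n)))
    {z : Euc n} (hz : z ∈ (A.map (LinearMap.snd ℝ (Euc n) (Euc n)))ᗮ) : (z, 0) ∈ A := by
  refine hmax.2 _ fun q hq => ?_
  have hzq : ⟪z, q.2⟫ = 0 := (Submodule.mem_orthogonal' _ _).1 hz _ ⟨q, hq, rfl⟩
  have := hmax.1.inner_nonneg (x := q.1) (u := q.2) hq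
  simp only [zero_sub, inner_neg_right, inner_sub_left, hzq]
  linarith

end LinearRelation

theorem stmt11 {n : ℕ} (A : Submodule ℝ (Euc n × Euc n))
    (hsym : SymRel (A : Set (Euc n × Euc n)))
    (hmax : MaxMonoRel (A : Set (Euc n × Euc n))) (y : Euc n) :
    fenchel (qrel (A : Set (Euc n × Euc n))) y
      = qrel {p : Euc n × Euc n | (p.2, p.1) ∈ A} y := by
  rw [← A.coe_relInv]
  by_cases hy : ∃ v, (v, y) ∈ A
  · obtain ⟨v, hv⟩ := hy
    rw [fenchel_qrel_eq_of_mem hsym hmax.1 hv, (SymRel.relInv hsym).qrel_eq hv]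
  · have hyR : y ∉ A.map (LinearMap.snd ℝ (Euc n) (Euc n)) := by
      rintro ⟨⟨v, y⟩, hv, rfl⟩
      exact hy ⟨v, hv⟩
    obtain ⟨z, hz, hyz⟩ := Submodule.exists_inner_ne_zero_of_notMem hyR
    rw [qrel_eq_top fun v hv => hy ⟨v, hv⟩]
    refine fenchel_eq_top_of_le_zero_on_line (fun t => ?_) hyz
    have hzA : (t • z, (0 : Euc n)) ∈ A := by
      simpa using A.smul_mem t (hmax.mem_of_mem_orthogonal_range hz)
    simp [hsym.qrel_eq hzA]
end

section
/- Let A : ℝⁿ ⇉ ℝⁿ be a maximally monotone symmetric linear relation. Then the subdifferential of q_A equals A, i.e., ∂q_A(x) = A x for all x, where q_A(x) = (1/2)⟨x, A x⟩ on dom A and ∞ otherwise. -/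
open scoped RealInnerProductSpace

lemma qrel_eq_of_mem_s12 {n : ℕ} (A : Submodule ℝ (Euc n × Euc n))
    (hsym : SymRel (A : Set (Euc n × Euc n))) {x w : Euc n} (hw : (x, w) ∈ A) :
    qrel (A : Set (Euc n × Euc n)) x = ((1 / 2 * ⟪x, w⟫ : ℝ) : EReal) := by
  have huniq : ∀ u : Euc n, (x, u) ∈ A → ⟪x, u⟫ = ⟪x, w⟫ := by
    intro u hu
    have h0 : ((0 : Euc n), u - w) ∈ A := by
      have := A.sub_mem hu hw
      simpa [Prod.ext_iff] using this
    have hs := hsym (x, w) hw ((0 : Euc n), u - w) h0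
    simp only [inner_sub_right, inner_zero_left] at hs
    linarith
  apply le_antisymm
  · exact iInf₂_le w hw
  · refine le_iInf fun u => le_iInf fun hu => ?_
    rw [huniq u hu]

lemma qrel_top_of_not_mem {n : ℕ} (A : Submodule ℝ (Euc n × Euc n)) {x : Euc n}
    (hx : ∀ w : Euc n, (x, w) ∉ A) :
    qrel (A : Set (Euc n × Euc n)) x = ⊤ := by
  simp only [qrel]
  rw [iInf_eq_top]
  intro u
  rw [iInf_eq_top]
  intro h
  exact absurd h (hx u)

theorem stmt12 {n : ℕ} (A : Submodule ℝ (Euc n × Euc n))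
    (hsym : SymRel (A : Set (Euc n × Euc n)))
    (hmax : MaxMonoRel (A : Set (Euc n × Euc n))) (x : Euc n) :
    esubdiff (qrel (A : Set (Euc n × Euc n))) x = {u : Euc n | (x, u) ∈ A} := by
  ext u
  simp only [esubdiff, Set.mem_setOf_eq]
  constructor
  · intro hu
    by_cases hx : ∃ w : Euc n, (x, w) ∈ A
    · obtain ⟨w, hw⟩ := hx
      have hqx := qrel_eq_of_mem_s12 A hsym hw
      -- key: ⟪u - w, y - x⟫ = 0 for all y in the domain
      have key : ∀ y v : Euc n, (y, v) ∈ A → ⟪u - w, y - x⟫ = 0 := by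
        intro y v hyv
        set c : ℝ := ⟪y - x, v - w⟫ with hc
        have hc0 : 0 ≤ c := by
          have := hmax.1 (y, v) hyv (x, w) hw
          simpa [hc] using this
        have main : ∀ t : ℝ, t * ⟪u - w, y - x⟫ ≤ t ^ 2 * c / 2 := by
          intro t
          have hpt : ((x + t • (y - x), w + t • (v - w)) : Euc n × Euc n) ∈ A := by
            have := A.add_mem hw (A.smul_mem t (A.sub_mem hyv hw))
            simpa [Prod.ext_iff] using this
          have hqz := qrel_eq_of_mem_s12 A hsym hpt
          have hineq := hu (x + t • (y - x))
          rw [hqx, hqz] at hineq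
          rw [show x + t • (y - x) - x = t • (y - x) by abel, ← EReal.coe_add,
            EReal.coe_le_coe_iff] at hineq
          have hsymxy : ⟪x, v⟫ = ⟪y, w⟫ := hsym (x, w) hw (y, v) hyv
          have hexp : ⟪x + t • (y - x), w + t • (v - w)⟫
              = ⟪x, w⟫ + t * ⟪x, v - w⟫ + t * ⟪y - x, w⟫ + t ^ 2 * ⟪y - x, v - w⟫ := by
            simp only [inner_add_left, inner_add_right, real_inner_smul_left,
              real_inner_smul_right]
            ring
          rw [hexp] at hineq
          have h1 : ⟪u, t • (y - x)⟫ = t * ⟪u, y - x⟫ := real_inner_smul_right u _ t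
          rw [h1] at hineq
          have h2 : ⟪x, v - w⟫ = ⟪y - x, w⟫ := by
            simp only [inner_sub_right, inner_sub_left]
            rw [hsymxy]
          have h3 : ⟪u - w, y - x⟫ = ⟪u, y - x⟫ - ⟪y - x, w⟫ := by
            rw [inner_sub_left, real_inner_comm w]
          rw [h2] at hineq
          rw [h3, hc]
          linarith
        set d : ℝ := ⟪u - w, y - x⟫ with hd
        have hquad : ∀ t : ℝ, 0 ≤ (c / 2) * (t * t) + (-d) * t + (0 : ℝ) := by
          intro t
          have := main t
          nlinarith [main t]
        have hdisc := discrim_le_zero hquad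
        rw [discrim] at hdisc
        have h4 : d ^ 2 = 0 := le_antisymm (by nlinarith) (sq_nonneg d)
        exact sq_eq_zero_iff.mp h4
      apply hmax.2
      intro q hq
      have hkey := key q.1 q.2 hq
      have hmono : 0 ≤ ⟪x - q.1, w - q.2⟫ := by
        have := hmax.1 (x, w) hw q hq
        simpa using this
      have hdecomp : ⟪x - q.1, u - q.2⟫ = ⟪x - q.1, u - w⟫ + ⟪x - q.1, w - q.2⟫ := by
        rw [← inner_add_right]
        congr 1
        abel
      have hz : ⟪x - q.1, u - w⟫ = 0 := by
        rw [real_inner_comm]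
        rw [show x - q.1 = -(q.1 - x) by abel, inner_neg_right, hkey, neg_zero]
      simp only []
      rw [hdecomp, hz]
      linarith
    · exfalso
      push_neg at hx
      have hqx := qrel_top_of_not_mem A hx
      have h0 : ((0 : Euc n), (0 : Euc n)) ∈ A := A.zero_mem
      have hq0 := qrel_eq_of_mem_s12 A hsym h0
      have := hu 0
      rw [hqx, hq0] at this
      simp [EReal.top_add_coe] at this
  · intro hxu y
    have hqx := qrel_eq_of_mem_s12 A hsym hxu
    by_cases hy : ∃ v : Euc n, (y, v) ∈ A
    · obtain ⟨v, hv⟩ := hy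
      have hqy := qrel_eq_of_mem_s12 A hsym hv
      rw [hqx, hqy, ← EReal.coe_add, EReal.coe_le_coe_iff]
      have hmono : 0 ≤ ⟪y - x, v - u⟫ := hmax.1 (y, v) hv (x, u) hxu
      have hsymxy : ⟪x, v⟫ = ⟪y, u⟫ := hsym (x, u) hxu (y, v) hv
      have hexp : ⟪y - x, v - u⟫ = ⟪y, v⟫ - ⟪y, u⟫ - ⟪x, v⟫ + ⟪x, u⟫ := by
        simp only [inner_sub_left, inner_sub_right]; ring
      have huy : ⟪u, y - x⟫ = ⟪y, u⟫ - ⟪x, u⟫ := by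
        rw [inner_sub_right, real_inner_comm u y, real_inner_comm u x]
      rw [hexp, hsymxy] at hmono
      linarith [huy]
    · push_neg at hy
      rw [qrel_top_of_not_mem A hy]
      exact le_top
end

section
/- Let f : ℝⁿ → ℝ be convex and differentiable with ∇f Lipschitz of constant r > 0. Then there exists a proper lsc convex function g : ℝⁿ → ℝ ∪ {∞} such that f = e_r g. Conversely, if f = e_r g for some proper lsc convex g, then ∇f is r-Lipschitz. -/
open scoped RealInnerProductSpace

/-!
For fixed `z`, the affine function `φ_z y = f z + ⟪∇f z, y - z⟫ + ‖∇f z‖² / (2r)` has Moreau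
envelope `x ↦ f z + ⟪∇f z, x - z⟫`, the tangent of `f` at `z`. For `g = sup_z φ_z` this gives
`e_r g x ≥ e_r φ_x x = f x`. Conversely, co-coercivity
`f z + ⟪∇f z, x - z⟫ + ‖∇f x - ∇f z‖² / (2r) ≤ f x`, which follows from convexity and the descent
lemma, says exactly that `g ≤ f x - ‖∇f x‖² / (2r)` at the prox point `x - r⁻¹ ∇f x`, whence
`e_r g x ≤ f x`.

In the other direction, `x ↦ r/2 ‖x‖² - e_r g x` is a supremum of affine functions of `x`, hence
convex. Its subgradient inequality is the descent lemma for `f`, which again yields co-coercivity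
and therefore the Lipschitz bound on `∇f`.
-/

open scoped NNReal

theorem ConvexOn.add_fderiv_sub_le {E : Type*} [NormedAddCommGroup E] [NormedSpace ℝ E]
    {s : Set E} {f : E → ℝ} {f' : E →L[ℝ] ℝ} {x y : E} (hf : ConvexOn ℝ s f)
    (hx : x ∈ s) (hy : y ∈ s) (hf' : HasFDerivAt f f' x) : f x + f' (y - x) ≤ f y := by
  set ℓ : ℝ →ᵃ[ℝ] E := AffineMap.lineMap x y
  have hline : HasDerivAt (f ∘ ℓ) (f' (y - x)) 0 :=
    HasFDerivAt.comp_hasDerivAt (0 : ℝ) (by simpa [ℓ] using hf') AffineMap.hasDerivAt_lineMap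
  have := (hf.comp_affineMap ℓ).le_slope_of_hasDerivAt
    (by simpa [ℓ] using hx) (by simpa [ℓ] using hy) zero_lt_one hline
  simp only [slope_def_field, Function.comp_apply, ℓ, AffineMap.lineMap_apply_one,
    AffineMap.lineMap_apply_zero, sub_zero, div_one] at this
  linarith

section

variable {E : Type*} [NormedAddCommGroup E] [InnerProductSpace ℝ E]

theorem EConvexFn.iSup_coe {ι : Sort*} {φ : ι → E → ℝ} (hφ : ∀ i, ConvexOn ℝ Set.univ (φ i)) :
    EConvexFn fun y => ⨆ i, (φ i y : EReal) := by
  intro x y a b ha hb hab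
  dsimp only
  refine iSup_le fun i => ?_
  calc (φ i (a • x + b • y) : EReal) ≤ ((a * φ i x + b * φ i y : ℝ) : EReal) :=
        EReal.coe_le_coe_iff.2 ((hφ i).2 trivial trivial ha hb hab)
    _ ≤ a * (⨆ i, (φ i x : EReal)) + b * ⨆ i, (φ i y : EReal) := by
        rw [EReal.coe_add, EReal.coe_mul, EReal.coe_mul]
        exact add_le_add
          (mul_le_mul_of_nonneg_left (le_iSup_of_le i le_rfl) (EReal.coe_nonneg.2 ha))
          (mul_le_mul_of_nonneg_left (le_iSup_of_le i le_rfl) (EReal.coe_nonneg.2 hb))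

theorem convexOn_half_mul_sq_norm_sub_of_eq_moreauEnv {r : ℝ} {f : E → ℝ} {g : E → EReal}
    (hg : ∀ x, (f x : EReal) = moreauEnv r g x) :
    ConvexOn ℝ Set.univ fun x => r / 2 * ‖x‖ ^ 2 - f x := by
  refine ⟨convex_univ, fun x _ y _ a b ha hb hab => ?_⟩
  set p := a • x + b • y
  set q := r / 2 * ‖p‖ ^ 2 - a * (r / 2 * ‖x‖ ^ 2 - f x) - b * (r / 2 * ‖y‖ ^ 2 - f y) with hq
  suffices h : (q : EReal) ≤ moreauEnv r g p by
    simp only [smul_eq_mul]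
    rw [← hg, EReal.coe_le_coe_iff] at h
    linarith
  refine le_iInf fun w => ?_
  have hle (z : E) : (f z : EReal) ≤ g w + (r / 2 * ‖w - z‖ ^ 2 : ℝ) := hg z ▸ iInf_le _ w
  generalize g w = c at hle ⊢
  induction c using EReal.rec with
  | bot => simpa using hle x
  | top => rw [EReal.top_add_of_ne_bot (EReal.coe_ne_bot _)]; exact le_top
  | coe c =>
    have hx : f x ≤ c + r / 2 * ‖w - x‖ ^ 2 := by exact_mod_cast hle x
    have hy : f y ≤ c + r / 2 * ‖w - y‖ ^ 2 := by exact_mod_cast hle y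
    rw [← EReal.coe_add, EReal.coe_le_coe_iff]
    rw [norm_sub_sq_real] at hx hy ⊢
    have hwp : ⟪w, p⟫ = a * ⟪w, x⟫ + b * ⟪w, y⟫ := by
      simp only [p, inner_add_right, real_inner_smul_right]
    rw [hwp]
    linear_combination a * hx + b * hy + (c + r / 2 * ‖w‖ ^ 2) * hab

end

section

variable {E : Type*} [NormedAddCommGroup E] [InnerProductSpace ℝ E] [CompleteSpace E]
  {f : E → ℝ} {r : ℝ}

theorem ConvexOn.add_inner_gradient_sub_le (hconv : ConvexOn ℝ Set.univ f) {x : E}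
    (hf : DifferentiableAt ℝ f x) (y : E) : f x + ⟪gradient f x, y - x⟫ ≤ f y := by
  simpa [inner_gradient_left] using hconv.add_fderiv_sub_le trivial trivial hf.hasFDerivAt

theorem hasDerivAt_comp_add_smul {x v : E} {t : ℝ} (hf : DifferentiableAt ℝ f (x + t • v)) :
    HasDerivAt (fun s : ℝ => f (x + s • v)) ⟪gradient f (x + t • v), v⟫ t := by
  have hline : HasDerivAt (fun s : ℝ => x + s • v) v t := by
    simpa using ((hasDerivAt_id t).smul_const v).const_add x
  have := hf.hasGradientAt.hasFDerivAt.comp_hasDerivAt t hline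
  rwa [InnerProductSpace.toDual_apply_apply] at this

theorem le_add_inner_gradient_add_of_lipschitzWith {K : ℝ≥0} (hf : Differentiable ℝ f)
    (hK : LipschitzWith K (gradient f)) (x y : E) :
    f y ≤ f x + ⟪gradient f x, y - x⟫ + K / 2 * ‖y - x‖ ^ 2 := by
  set v := y - x
  let φ : ℝ → ℝ := fun t => f (x + t • v) - t * ⟪gradient f x, v⟫ - K / 2 * ‖v‖ ^ 2 * t ^ 2
  have hφ (t : ℝ) : HasDerivAt φ
      (⟪gradient f (x + t • v), v⟫ - ⟪gradient f x, v⟫ - K * ‖v‖ ^ 2 * t) t := by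
    refine (((hasDerivAt_comp_add_smul (hf _)).sub ((hasDerivAt_id t).mul_const _)).sub
      ((hasDerivAt_pow 2 t).const_mul (K / 2 * ‖v‖ ^ 2))).congr_deriv ?_
    push_cast; ring
  have hanti : AntitoneOn φ (Set.Ici 0) := by
    refine antitoneOn_of_hasDerivWithinAt_nonpos (convex_Ici 0)
      (fun t _ => (hφ t).continuousAt.continuousWithinAt) (fun t _ => (hφ t).hasDerivWithinAt)
      fun t ht => ?_
    rw [interior_Ici, Set.mem_Ioi] at ht
    have hgrad : ‖gradient f (x + t • v) - gradient f x‖ ≤ K * (t * ‖v‖) := by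
      simpa [← dist_eq_norm, norm_smul, abs_of_pos ht] using hK.dist_le_mul (x + t • v) x
    calc ⟪gradient f (x + t • v), v⟫ - ⟪gradient f x, v⟫ - K * ‖v‖ ^ 2 * t
        = ⟪gradient f (x + t • v) - gradient f x, v⟫ - K * (t * ‖v‖) * ‖v‖ := by
          rw [inner_sub_left]; ring
      _ ≤ 0 := sub_nonpos.2 <| (real_inner_le_norm _ _).trans <|
          mul_le_mul_of_nonneg_right hgrad (norm_nonneg v)
  have := hanti Set.self_mem_Ici (show (0 : ℝ) ≤ 1 from zero_le_one) zero_le_one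
  simp only [φ, one_smul, zero_smul, add_zero, one_mul, zero_mul, one_pow, mul_one, v,
    add_sub_cancel] at this
  linarith

theorem le_add_inner_gradient_add_of_convexOn
    (hconv : ConvexOn ℝ Set.univ fun x => r / 2 * ‖x‖ ^ 2 - f x) {x : E}
    (hf : DifferentiableAt ℝ f x) (y : E) :
    f y ≤ f x + ⟪gradient f x, y - x⟫ + r / 2 * ‖y - x‖ ^ 2 := by
  have hderiv := ((hasStrictFDerivAt_norm_sq x).hasFDerivAt.const_mul (r / 2)).sub
    hf.hasFDerivAt
  have := hconv.add_fderiv_sub_le (y := y) trivial trivial hderiv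
  simp only [sub_apply, smul_apply, innerSL_apply_apply, ← inner_gradient_left, smul_eq_mul,
    nsmul_eq_mul, Nat.cast_ofNat] at this
  have hsq : ‖y - x‖ ^ 2 = ‖y‖ ^ 2 - ‖x‖ ^ 2 - 2 * ⟪x, y - x⟫ := by
    rw [norm_sub_sq_real, inner_sub_right, real_inner_self_eq_norm_sq, real_inner_comm]; ring
  rw [hsq]
  linarith

theorem ConvexOn.add_inner_gradient_add_sq_div_le (hconv : ConvexOn ℝ Set.univ f)
    (hf : Differentiable ℝ f) (hr : 0 < r)
    (hdes : ∀ x y, f y ≤ f x + ⟪gradient f x, y - x⟫ + r / 2 * ‖y - x‖ ^ 2) (x z : E) :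
    f z + ⟪gradient f z, x - z⟫ + ‖gradient f x - gradient f z‖ ^ 2 / (2 * r) ≤ f x := by
  set d := gradient f x - gradient f z
  have h₁ := hconv.add_inner_gradient_sub_le (hf z) (x - r⁻¹ • d)
  have h₂ := hdes x (x - r⁻¹ • d)
  rw [show x - r⁻¹ • d - z = (x - z) - r⁻¹ • d by abel, inner_sub_right,
    real_inner_smul_right] at h₁
  rw [sub_sub_cancel_left, inner_neg_right, real_inner_smul_right, norm_neg, norm_smul,
    Real.norm_eq_abs, abs_inv, abs_of_pos hr, mul_pow, ← mul_assoc,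
    show r / 2 * r⁻¹ ^ 2 = (2 * r)⁻¹ by field_simp] at h₂
  have hd : ⟪gradient f x, d⟫ - ⟪gradient f z, d⟫ = ‖d‖ ^ 2 := by
    rw [← inner_sub_left, real_inner_self_eq_norm_sq]
  linear_combination h₁ + h₂ - r⁻¹ * hd

theorem lipschitzWith_gradient_of_cocoercive (hr : 0 < r)
    (h : ∀ x z : E,
      f z + ⟪gradient f z, x - z⟫ + ‖gradient f x - gradient f z‖ ^ 2 / (2 * r) ≤ f x) :
    LipschitzWith (Real.toNNReal r) (gradient f) := by
  refine LipschitzWith.of_dist_le_mul fun x z => ?_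
  rw [dist_eq_norm, dist_eq_norm, Real.coe_toNNReal r hr.le]
  set d := gradient f x - gradient f z
  have hsum : ‖d‖ ^ 2 ≤ r * ⟪d, x - z⟫ := by
    have h₁ := h x z
    have h₂ := h z x
    rw [norm_sub_rev] at h₂
    rw [← neg_sub x z, inner_neg_right] at h₂
    have : ‖d‖ ^ 2 / r ≤ ⟪d, x - z⟫ := by
      rw [inner_sub_left]; linarith [show ‖d‖ ^ 2 / r = 2 * (‖d‖ ^ 2 / (2 * r)) by ring]
    rwa [div_le_iff₀' hr] at this
  have hcs : ‖d‖ ^ 2 ≤ r * (‖d‖ * ‖x - z‖) :=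
    hsum.trans (mul_le_mul_of_nonneg_left (real_inner_le_norm _ _) hr.le)
  nlinarith [norm_nonneg d, mul_nonneg hr.le (norm_nonneg (x - z))]

-- This is `(f^* - ‖·‖² / (2r))^*`, parametrised by `u = ∇f z` via `f^*(∇f z) = ⟪∇f z, z⟫ - f z`.
noncomputable def moreauEnvPreimage (r : ℝ) (f : E → ℝ) (y : E) : EReal :=
  ⨆ z, ((f z + ⟪gradient f z, y - z⟫ + ‖gradient f z‖ ^ 2 / (2 * r) : ℝ) : EReal)

theorem lowerSemicontinuous_moreauEnvPreimage (r : ℝ) (f : E → ℝ) :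
    LowerSemicontinuous (moreauEnvPreimage r f) :=
  lowerSemicontinuous_iSup fun _ =>
    (continuous_coe_real_ereal.comp (by fun_prop)).lowerSemicontinuous

theorem econvexFn_moreauEnvPreimage (r : ℝ) (f : E → ℝ) : EConvexFn (moreauEnvPreimage r f) :=
  EConvexFn.iSup_coe fun z => ⟨convex_univ, fun x _ y _ a b _ _ hab => le_of_eq <| by
    simp only [inner_sub_right, inner_add_right, real_inner_smul_right, smul_eq_mul]
    linear_combination
      -(f z - ⟪gradient f z, z⟫ + ‖gradient f z‖ ^ 2 / (2 * r)) * hab⟩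

theorem moreauEnvPreimage_sub_inv_smul_gradient_le (hconv : ConvexOn ℝ Set.univ f)
    (hf : Differentiable ℝ f) (hr : 0 < r)
    (hdes : ∀ x y, f y ≤ f x + ⟪gradient f x, y - x⟫ + r / 2 * ‖y - x‖ ^ 2) (x : E) :
    moreauEnvPreimage r f (x - r⁻¹ • gradient f x)
      ≤ ((f x - ‖gradient f x‖ ^ 2 / (2 * r) : ℝ) : EReal) := by
  refine iSup_le fun z => EReal.coe_le_coe_iff.2 ?_
  have h := hconv.add_inner_gradient_add_sq_div_le hf hr hdes x z
  rw [norm_sub_sq_real] at h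
  rw [sub_right_comm, inner_sub_right, real_inner_smul_right,
    real_inner_comm (gradient f x)]
  linear_combination h

theorem properFn_moreauEnvPreimage (hconv : ConvexOn ℝ Set.univ f) (hf : Differentiable ℝ f)
    (hr : 0 < r) (hdes : ∀ x y, f y ≤ f x + ⟪gradient f x, y - x⟫ + r / 2 * ‖y - x‖ ^ 2) :
    ProperFn (moreauEnvPreimage r f) :=
  ⟨⟨_, ne_top_of_le_ne_top (EReal.coe_ne_top _)
      (moreauEnvPreimage_sub_inv_smul_gradient_le hconv hf hr hdes 0)⟩,
    fun _ => ne_bot_of_le_ne_bot (EReal.coe_ne_bot _) (le_iSup_of_le 0 le_rfl)⟩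

theorem moreauEnv_moreauEnvPreimage (hconv : ConvexOn ℝ Set.univ f) (hf : Differentiable ℝ f)
    (hr : 0 < r) (hdes : ∀ x y, f y ≤ f x + ⟪gradient f x, y - x⟫ + r / 2 * ‖y - x‖ ^ 2)
    (x : E) : moreauEnv r (moreauEnvPreimage r f) x = f x := by
  apply le_antisymm
  · set y := x - r⁻¹ • gradient f x
    have hy : r / 2 * ‖y - x‖ ^ 2 = ‖gradient f x‖ ^ 2 / (2 * r) := by
      rw [sub_sub_cancel_left, norm_neg, norm_smul, Real.norm_eq_abs, abs_inv, abs_of_pos hr]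
      field_simp
    calc moreauEnv r (moreauEnvPreimage r f) x
        ≤ moreauEnvPreimage r f y + ((r / 2 * ‖y - x‖ ^ 2 : ℝ) : EReal) := iInf_le _ y
      _ ≤ ((f x - ‖gradient f x‖ ^ 2 / (2 * r) : ℝ) : EReal)
            + ((r / 2 * ‖y - x‖ ^ 2 : ℝ) : EReal) :=
          add_le_add_left (moreauEnvPreimage_sub_inv_smul_gradient_le hconv hf hr hdes x) _
      _ = f x := by rw [← EReal.coe_add, hy, sub_add_cancel]
  · refine le_iInf fun y => ?_
    -- the gap is the square `‖∇f x + r (y - x)‖² / (2r)`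
    have hgap : f x ≤ f x + ⟪gradient f x, y - x⟫ + ‖gradient f x‖ ^ 2 / (2 * r)
        + r / 2 * ‖y - x‖ ^ 2 := by
      have hsq := norm_add_sq_real (gradient f x) (r • (y - x))
      rw [real_inner_smul_right, norm_smul, Real.norm_eq_abs, abs_of_pos hr] at hsq
      have : 0 ≤ ‖gradient f x + r • (y - x)‖ ^ 2 / (2 * r) := by positivity
      rw [hsq] at this
      field_simp at this ⊢
      linarith
    calc (f x : EReal)
        ≤ ((f x + ⟪gradient f x, y - x⟫ + ‖gradient f x‖ ^ 2 / (2 * r) : ℝ) : EReal)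
          + ((r / 2 * ‖y - x‖ ^ 2 : ℝ) : EReal) := by
          rw [← EReal.coe_add]; exact EReal.coe_le_coe_iff.2 hgap
      _ ≤ moreauEnvPreimage r f y + ((r / 2 * ‖y - x‖ ^ 2 : ℝ) : EReal) :=
          add_le_add_left (by exact le_iSup_of_le x le_rfl) _

end

theorem stmt18 {n : ℕ} (r : ℝ) (hr : 0 < r) (f : Euc n → ℝ)
    (hconv : ConvexOn ℝ Set.univ f) (hdiff : Differentiable ℝ f) :
    LipschitzWith (Real.toNNReal r) (fun x => gradient f x)
      ↔ ∃ g : Euc n → EReal, ProperFn g ∧ LowerSemicontinuous g ∧ EConvexFn g ∧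
          ∀ x : Euc n, ((f x : ℝ) : EReal) = moreauEnv r g x := by
  constructor
  · intro hlip
    have hdes (x y : Euc n) : f y ≤ f x + ⟪gradient f x, y - x⟫ + r / 2 * ‖y - x‖ ^ 2 := by
      simpa [hr.le] using le_add_inner_gradient_add_of_lipschitzWith hdiff hlip x y
    exact ⟨moreauEnvPreimage r f, properFn_moreauEnvPreimage hconv hdiff hr hdes,
      lowerSemicontinuous_moreauEnvPreimage r f, econvexFn_moreauEnvPreimage r f,
      fun x => (moreauEnv_moreauEnvPreimage hconv hdiff hr hdes x).symm⟩
  · rintro ⟨g, -, -, -, hg⟩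
    have hdes (x y : Euc n) := le_add_inner_gradient_add_of_convexOn
      (convexOn_half_mul_sq_norm_sub_of_eq_moreauEnv hg) (hdiff x) y
    exact lipschitzWith_gradient_of_cocoercive hr
      (hconv.add_inner_gradient_add_sq_div_le hdiff hr hdes)
end

section
/- Let r₁, r₂ > 0 and g, h : ℝⁿ → ℝ ∪ {∞} be proper lsc convex. Then there exists a proper lsc convex f : ℝⁿ → ℝ ∪ {∞} with e_{r₁} g + e_{r₂} h = e_{r₁+r₂} f; specifically f(x) = sup_{v ∈ ℝⁿ} { [e_{r₁} g(x+v) − (r₁/2)‖v‖²] + [e_{r₂} h(x+v) − (r₂/2)‖v‖²] }. -/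
/-!
A proximal point `p` of `g` at `x` exists (an affine minorant makes `g + (r/2)‖· - x‖²`
coercive), so `e_r g` is a finite convex function lying below its quadratic models
`y ↦ e_r g x + ⟪r (x - p), y - x⟫ + (r/2)‖y - x‖²`. Hence `φ = e_{r₁} g + e_{r₂} h` is finite,
convex and has quadratic majorants of curvature `R = r₁ + r₂` at every point, and
`f z = sup_w φ w - (R/2)‖w - z‖²`. For such `φ`, `e_R f ≥ φ` is immediate from the definitions,
and at `z = x - u / R`, `u` the slope of the majorant at `x`, the majorant gives
`f z = φ x - (R/2)‖z - x‖²`, whence `e_R f ≤ φ`. Convexity of `f` comes from that of `φ`, and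
lower semicontinuity from the continuity of the finite convex function `φ`.
-/

open scoped RealInnerProductSpace

open Set

section AffineMinorant

variable {E : Type*} {g : E → EReal}

lemma ProperFn.exists_eq_coe (hg : ProperFn g) {y : E} (hy : g y ≠ ⊤) : ∃ t : ℝ, g y = t :=
  ⟨_, (EReal.coe_toReal hy (hg.2 y)).symm⟩

lemma EConvexFn.convex_epigraph [AddCommGroup E] [Module ℝ E] (hg : EConvexFn g) :
    Convex ℝ {p : E × ℝ | g p.1 ≤ p.2} := by
  intro p hp q hq a b ha hb hab
  calc g (a • p.1 + b • q.1) ≤ a * g p.1 + b * g q.1 := hg _ _ a b ha hb hab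
    _ ≤ a * p.2 + b * q.2 := by gcongr <;> assumption
    _ = ((a • p + b • q).2 : ℝ) := by simp

lemma LowerSemicontinuous.isClosed_real_epigraph [TopologicalSpace E]
    (hg : LowerSemicontinuous g) : IsClosed {p : E × ℝ | g p.1 ≤ p.2} :=
  hg.isClosed_epigraph.preimage
    (continuous_fst.prodMk (continuous_coe_real_ereal.comp continuous_snd))

/-- Separate `(x₀, g x₀ - 1)` from the closed convex real epigraph; the separating functional
has positive slope in the vertical direction, so its level set is the graph of a minorant. -/
theorem EConvexFn.exists_affine_le [AddCommGroup E] [Module ℝ E] [TopologicalSpace E]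
    [IsTopologicalAddGroup E] [ContinuousSMul ℝ E] [LocallyConvexSpace ℝ E]
    (hg : ProperFn g) (hglsc : LowerSemicontinuous g) (hgconv : EConvexFn g) :
    ∃ (L : StrongDual ℝ E) (c : ℝ), ∀ y, ((L y + c : ℝ) : EReal) ≤ g y := by
  obtain ⟨x₀, hx₀⟩ := hg.1
  obtain ⟨t₀, ht₀⟩ := hg.exists_eq_coe hx₀
  obtain ⟨ℓ, u, hℓu, hepi⟩ := geometric_hahn_banach_point_closed hgconv.convex_epigraph
    hglsc.isClosed_real_epigraph (x := (x₀, t₀ - 1))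
    (by simp only [mem_ofPred_eq, ht₀, EReal.coe_le_coe_iff]; linarith)
  have hℓ (y : E) (t : ℝ) : ℓ (y, t) = ℓ (y, 0) + t * ℓ (0, 1) := by
    rw [← smul_eq_mul, ← map_smul, ← map_add]; simp
  set β := ℓ (0, 1)
  have hβ : 0 < β := by
    have := hepi (x₀, t₀) (by simp [ht₀])
    rw [hℓ] at this hℓu
    linarith
  refine ⟨-β⁻¹ • ℓ.comp (.inl ℝ E ℝ), u / β, fun y => ?_⟩
  by_cases hy : g y = ⊤
  · simp [hy]
  obtain ⟨t, ht⟩ := hg.exists_eq_coe hy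
  have := hepi (y, t) (by simp [ht])
  rw [hℓ] at this
  have : (u - ℓ (y, 0)) / β ≤ t := by rw [div_le_iff₀ hβ]; linarith
  rw [ht, EReal.coe_le_coe_iff]
  simp only [smul_apply, ContinuousLinearMap.comp_apply, ContinuousLinearMap.inl_apply,
    smul_eq_mul]
  linarith [show -β⁻¹ * ℓ (y, 0) + u / β = (u - ℓ (y, 0)) / β by ring]

end AffineMinorant

theorem LowerSemicontinuous.exists_forall_le_of_isCompact {α β : Type*} [TopologicalSpace α]
    [LinearOrder β] {F : α → β} (hF : LowerSemicontinuous F) (x₀ : α)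
    (hT : IsCompact {y | F y ≤ F x₀}) : ∃ p, ∀ y, F p ≤ F y := by
  have hx₀ : x₀ ∈ {y | F y ≤ F x₀} := le_refl (F x₀)
  obtain ⟨p, -, hmin⟩ :=
    LowerSemicontinuousOn.exists_isMinOn ⟨x₀, hx₀⟩ hT (hF.lowerSemicontinuousOn _)
  refine ⟨p, fun y => ?_⟩
  by_cases hy : F y ≤ F x₀
  · exact hmin hy
  · exact (hmin hx₀).trans (not_le.1 hy).le

section Normed

variable {E : Type*} [NormedAddCommGroup E] {r R : ℝ} {g : E → EReal} {φ : E → ℝ}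

lemma LowerSemicontinuous.add_sq_dist (hglsc : LowerSemicontinuous g) (x : E) :
    LowerSemicontinuous fun y => g y + ((r / 2 * ‖y - x‖ ^ 2 : ℝ) : EReal) :=
  hglsc.add' (continuous_coe_real_ereal.comp (by fun_prop)).lowerSemicontinuous
    fun _ => EReal.continuousAt_add (Or.inr (EReal.coe_ne_bot _)) (Or.inr (EReal.coe_ne_top _))

lemma norm_sub_le_of_add_sq_dist_le [NormedSpace ℝ E] (hr : 0 < r) {L : StrongDual ℝ E}
    {c : ℝ} (hL : ∀ y, ((L y + c : ℝ) : EReal) ≤ g y) (x : E) {V : ℝ} {y : E}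
    (hy : g y + ((r / 2 * ‖y - x‖ ^ 2 : ℝ) : EReal) ≤ V) :
    ‖y - x‖ ≤ max 1 (2 / r * (|V - c - L x| + ‖L‖)) := by
  have hV : L y + c + r / 2 * ‖y - x‖ ^ 2 ≤ V := by
    rw [← EReal.coe_le_coe_iff, EReal.coe_add]
    exact (add_le_add_left (hL y) _).trans hy
  have hLy : L x - ‖L‖ * ‖y - x‖ ≤ L y := by
    have := (abs_le.1 ((L.le_opNorm (y - x)).trans_eq' (Real.norm_eq_abs _).symm)).1
    rw [map_sub] at this
    linarith
  set t := ‖y - x‖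
  rw [le_max_iff, or_iff_not_imp_left, not_le]
  intro ht
  rw [div_mul_eq_mul_div, le_div_iff₀ hr]
  nlinarith [le_abs_self (V - c - L x), norm_nonneg L, abs_nonneg (V - c - L x)]

/-- `sup_w φ w - (R/2)‖w - z‖²`, i.e. `-moreauEnv R (-φ) z`, parametrized by `w = z + v`. -/
noncomputable def moreauSupEnv (R : ℝ) (φ : E → ℝ) (z : E) : EReal :=
  ⨆ v : E, ((φ (z + v) - R / 2 * ‖v‖ ^ 2 : ℝ) : EReal)

lemma le_moreauSupEnv (z v : E) :
    ((φ (z + v) - R / 2 * ‖v‖ ^ 2 : ℝ) : EReal) ≤ moreauSupEnv R φ z :=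
  le_iSup (fun v => ((φ (z + v) - R / 2 * ‖v‖ ^ 2 : ℝ) : EReal)) v

lemma LowerSemicontinuous.moreauSupEnv (hφ : LowerSemicontinuous φ) :
    LowerSemicontinuous (moreauSupEnv R φ) :=
  lowerSemicontinuous_iSup fun v =>
    continuous_coe_real_ereal.comp_lowerSemicontinuous
      ((hφ.comp (continuous_add_const v)).add lowerSemicontinuous_const)
      EReal.coe_strictMono.monotone

lemma ConvexOn.eConvexFn_moreauSupEnv [NormedSpace ℝ E] (hφ : ConvexOn ℝ univ φ) :
    EConvexFn (moreauSupEnv R φ) := by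
  intro x y a b ha hb hab
  refine iSup_le fun v => ?_
  set q := R / 2 * ‖v‖ ^ 2
  have hxy : a • x + b • y + v = a • (x + v) + b • (y + v) := by
    rw [smul_add, smul_add, add_add_add_comm, ← add_smul, hab, one_smul]
  have hconv := hφ.2 (mem_univ (x + v)) (mem_univ (y + v)) ha hb hab
  rw [smul_eq_mul, smul_eq_mul, ← hxy] at hconv
  calc ((φ (a • x + b • y + v) - q : ℝ) : EReal)
      ≤ ((a * (φ (x + v) - q) + b * (φ (y + v) - q) : ℝ) : EReal) := by
        rw [EReal.coe_le_coe_iff]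
        linear_combination hconv + q * hab
    _ = a * ((φ (x + v) - q : ℝ) : EReal) + b * ((φ (y + v) - q : ℝ) : EReal) := by
        norm_cast
    _ ≤ a * moreauSupEnv R φ x + b * moreauSupEnv R φ y := by
        gcongr <;> exact le_moreauSupEnv _ v

end Normed

section InnerProduct

variable {E : Type*} [NormedAddCommGroup E] [InnerProductSpace ℝ E] {r R : ℝ} {g : E → EReal}
  {φ : E → ℝ}

lemma moreauEnv_le_of_eq_coe {p : E} {s : ℝ} (hp : g p = s) (y : E) :
    moreauEnv r g y ≤ ((s + r / 2 * ‖p - y‖ ^ 2 : ℝ) : EReal) :=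
  (iInf_le _ p).trans_eq (by rw [hp, EReal.coe_add])

theorem exists_moreauEnv_eq_coe [ProperSpace E] (hr : 0 < r) (hg : ProperFn g)
    (hglsc : LowerSemicontinuous g) (hgconv : EConvexFn g) (x : E) :
    ∃ p : E, ∃ s : ℝ, g p = s ∧
      moreauEnv r g x = ((s + r / 2 * ‖p - x‖ ^ 2 : ℝ) : EReal) := by
  obtain ⟨L, c, hL⟩ := hgconv.exists_affine_le hg hglsc
  obtain ⟨x₀, hx₀⟩ := hg.1
  obtain ⟨t₀, ht₀⟩ := hg.exists_eq_coe hx₀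
  set F : E → EReal := fun y => g y + ((r / 2 * ‖y - x‖ ^ 2 : ℝ) : EReal)
  have hF : LowerSemicontinuous F := hglsc.add_sq_dist x
  have hFx₀ : F x₀ = ((t₀ + r / 2 * ‖x₀ - x‖ ^ 2 : ℝ) : EReal) := by
    simp only [F, ht₀, EReal.coe_add]
  have hT : IsCompact {y | F y ≤ F x₀} :=
    (isCompact_closedBall x _).of_isClosed_subset (hF.isClosed_preimage _) fun y hy =>
      mem_closedBall_iff_norm.2 (norm_sub_le_of_add_sq_dist_le hr hL x (hy.trans_eq hFx₀))
  obtain ⟨p, hp⟩ := hF.exists_forall_le_of_isCompact x₀ hT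
  have hpx₀ : g p ≠ ⊤ := by
    intro h
    have := hp x₀
    rw [hFx₀] at this
    simp only [F, h, EReal.top_add_coe, top_le_iff, EReal.coe_ne_top] at this
  obtain ⟨s, hs⟩ := hg.exists_eq_coe hpx₀
  refine ⟨p, s, hs, le_antisymm (moreauEnv_le_of_eq_coe hs x) ?_⟩
  rw [EReal.coe_add, ← hs]
  exact le_iInf hp

lemma coe_toReal_moreauEnv [ProperSpace E] (hr : 0 < r) (hg : ProperFn g)
    (hglsc : LowerSemicontinuous g) (hgconv : EConvexFn g) (x : E) :
    (((moreauEnv r g x).toReal : ℝ) : EReal) = moreauEnv r g x := by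
  obtain ⟨p, s, -, hx⟩ := exists_moreauEnv_eq_coe hr hg hglsc hgconv x
  rw [hx, EReal.toReal_coe]

theorem convexOn_toReal_moreauEnv [ProperSpace E] (hr : 0 < r) (hg : ProperFn g)
    (hglsc : LowerSemicontinuous g) (hgconv : EConvexFn g) :
    ConvexOn ℝ univ fun x => (moreauEnv r g x).toReal := by
  refine ⟨convex_univ, fun x _ y _ a b ha hb hab => ?_⟩
  obtain ⟨p, s, hp, hx⟩ := exists_moreauEnv_eq_coe hr hg hglsc hgconv x
  obtain ⟨q, t, hq, hy⟩ := exists_moreauEnv_eq_coe hr hg hglsc hgconv y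
  have hgpq : g (a • p + b • q) ≤ ((a * s + b * t : ℝ) : EReal) :=
    (hgconv p q a b ha hb hab).trans_eq (by rw [hp, hq]; norm_cast)
  have hsq : ‖a • p + b • q - (a • x + b • y)‖ ^ 2
      ≤ a * ‖p - x‖ ^ 2 + b * ‖q - y‖ ^ 2 := by
    have := (convexOn_univ_norm.pow (fun _ _ => norm_nonneg _) 2).2 (mem_univ (p - x))
      (mem_univ (q - y)) ha hb hab
    simpa only [Pi.pow_apply, smul_sub, smul_eq_mul, sub_add_sub_comm] using this
  simp only [hx, hy, EReal.toReal_coe, smul_eq_mul]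
  rw [← EReal.coe_le_coe_iff, coe_toReal_moreauEnv hr hg hglsc hgconv]
  calc moreauEnv r g (a • x + b • y)
      ≤ g (a • p + b • q)
        + ((r / 2 * ‖a • p + b • q - (a • x + b • y)‖ ^ 2 : ℝ) : EReal) :=
        iInf_le _ _
    _ ≤ ((a * s + b * t : ℝ) : EReal)
        + ((r / 2 * (a * ‖p - x‖ ^ 2 + b * ‖q - y‖ ^ 2) : ℝ) : EReal) := by
        gcongr
    _ = _ := by
        norm_cast
        ring

/-- The descent-lemma form of `R`-Lipschitz continuity of the gradient, which needs no
differentiability. -/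
def HasQuadraticUpperBounds (R : ℝ) (φ : E → ℝ) : Prop :=
  ∀ x, ∃ u : E, ∀ y, φ y ≤ φ x + ⟪u, y - x⟫ + R / 2 * ‖y - x‖ ^ 2

theorem hasQuadraticUpperBounds_toReal_moreauEnv [ProperSpace E] (hr : 0 < r)
    (hg : ProperFn g) (hglsc : LowerSemicontinuous g) (hgconv : EConvexFn g) :
    HasQuadraticUpperBounds r fun x => (moreauEnv r g x).toReal := by
  intro x
  obtain ⟨p, s, hp, hx⟩ := exists_moreauEnv_eq_coe hr hg hglsc hgconv x
  refine ⟨r • (x - p), fun y => ?_⟩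
  simp only [hx, EReal.toReal_coe]
  rw [← EReal.coe_le_coe_iff, coe_toReal_moreauEnv hr hg hglsc hgconv]
  refine (moreauEnv_le_of_eq_coe hp y).trans_eq ?_
  rw [show p - y = (p - x) - (y - x) by abel, norm_sub_sq_real, real_inner_smul_left,
    ← neg_sub p x, inner_neg_left]
  congr 1
  ring

lemma HasQuadraticUpperBounds.add {r₁ r₂ : ℝ} {φ₁ φ₂ : E → ℝ}
    (h₁ : HasQuadraticUpperBounds r₁ φ₁) (h₂ : HasQuadraticUpperBounds r₂ φ₂) :
    HasQuadraticUpperBounds (r₁ + r₂) (φ₁ + φ₂) := by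
  intro x
  obtain ⟨u₁, hu₁⟩ := h₁ x
  obtain ⟨u₂, hu₂⟩ := h₂ x
  refine ⟨u₁ + u₂, fun y => ?_⟩
  simp only [Pi.add_apply, inner_add_left]
  linear_combination hu₁ y + hu₂ y

lemma HasQuadraticUpperBounds.exists_moreauSupEnv_le (hφ : HasQuadraticUpperBounds R φ)
    (hR : R ≠ 0) (x : E) :
    ∃ z, moreauSupEnv R φ z ≤ ((φ x - R / 2 * ‖z - x‖ ^ 2 : ℝ) : EReal) := by
  obtain ⟨u, hu⟩ := hφ x
  set w := R⁻¹ • u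
  have hu' : u = R • w := (smul_inv_smul₀ hR u).symm
  refine ⟨x - w, iSup_le fun v => ?_⟩
  have := hu (x - w + v)
  rw [show x - w + v - x = v - w by abel, hu', real_inner_smul_left, inner_sub_right,
    norm_sub_sq_real, real_inner_self_eq_norm_sq, real_inner_comm] at this
  rw [EReal.coe_le_coe_iff, show x - w - x = -w by abel, norm_neg]
  linear_combination this

theorem HasQuadraticUpperBounds.moreauEnv_moreauSupEnv (hφ : HasQuadraticUpperBounds R φ)
    (hR : R ≠ 0) (x : E) : moreauEnv R (moreauSupEnv R φ) x = φ x := by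
  apply le_antisymm
  · obtain ⟨z, hz⟩ := hφ.exists_moreauSupEnv_le hR x
    calc moreauEnv R (moreauSupEnv R φ) x
        ≤ moreauSupEnv R φ z + ((R / 2 * ‖z - x‖ ^ 2 : ℝ) : EReal) := iInf_le _ z
      _ ≤ ((φ x - R / 2 * ‖z - x‖ ^ 2 : ℝ) : EReal)
          + ((R / 2 * ‖z - x‖ ^ 2 : ℝ) : EReal) := by
        gcongr
      _ = φ x := by rw [← EReal.coe_add, sub_add_cancel]
  · refine le_iInf fun z => ?_
    calc (φ x : EReal)
        = ((φ (z + (x - z)) - R / 2 * ‖x - z‖ ^ 2 : ℝ) : EReal)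
          + ((R / 2 * ‖z - x‖ ^ 2 : ℝ) : EReal) := by
          rw [add_sub_cancel, norm_sub_rev, ← EReal.coe_add, sub_add_cancel]
      _ ≤ moreauSupEnv R φ z + ((R / 2 * ‖z - x‖ ^ 2 : ℝ) : EReal) := by
          gcongr
          exact le_moreauSupEnv z (x - z)

lemma HasQuadraticUpperBounds.properFn_moreauSupEnv (hφ : HasQuadraticUpperBounds R φ)
    (hR : R ≠ 0) : ProperFn (moreauSupEnv R φ) := by
  obtain ⟨z, hz⟩ := hφ.exists_moreauSupEnv_le hR 0
  exact ⟨⟨z, ne_top_of_le_ne_top (EReal.coe_ne_top _) hz⟩,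
    fun x => ne_bot_of_le_ne_bot (EReal.coe_ne_bot _) (le_moreauSupEnv x 0)⟩

end InnerProduct

theorem stmt19 {n : ℕ} (r₁ r₂ : ℝ) (hr₁ : 0 < r₁) (hr₂ : 0 < r₂)
    (g h : Euc n → EReal) (hg : ProperFn g) (hglsc : LowerSemicontinuous g)
    (hgconv : EConvexFn g) (hh : ProperFn h) (hhlsc : LowerSemicontinuous h)
    (hhconv : EConvexFn h)
    (f : Euc n → EReal)
    (hf : f = fun x => ⨆ v : Euc n,
      (moreauEnv r₁ g (x + v) - ((r₁ / 2 * ‖v‖ ^ 2 : ℝ) : EReal))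
        + (moreauEnv r₂ h (x + v) - ((r₂ / 2 * ‖v‖ ^ 2 : ℝ) : EReal))) :
    ProperFn f ∧ LowerSemicontinuous f ∧ EConvexFn f ∧
      ∀ x : Euc n, moreauEnv r₁ g x + moreauEnv r₂ h x = moreauEnv (r₁ + r₂) f x := by
  set φ := (fun x => (moreauEnv r₁ g x).toReal) + fun x => (moreauEnv r₂ h x).toReal
  have hg_coe := coe_toReal_moreauEnv hr₁ hg hglsc hgconv
  have hh_coe := coe_toReal_moreauEnv hr₂ hh hhlsc hhconv
  have hφ : HasQuadraticUpperBounds (r₁ + r₂) φ :=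
    (hasQuadraticUpperBounds_toReal_moreauEnv hr₁ hg hglsc hgconv).add
      (hasQuadraticUpperBounds_toReal_moreauEnv hr₂ hh hhlsc hhconv)
  have hφconv : ConvexOn ℝ univ φ :=
    (convexOn_toReal_moreauEnv hr₁ hg hglsc hgconv).add
      (convexOn_toReal_moreauEnv hr₂ hh hhlsc hhconv)
  have hfφ : f = moreauSupEnv (r₁ + r₂) φ := by
    rw [hf]
    ext x
    refine iSup_congr fun v => ?_
    rw [← hg_coe, ← hh_coe]
    norm_cast
    simp only [φ, Pi.add_apply]
    ring
  have hR : r₁ + r₂ ≠ 0 := by positivity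
  subst hfφ
  refine ⟨hφ.properFn_moreauSupEnv hR,
    (continuousOn_univ.1 (hφconv.continuousOn isOpen_univ)).lowerSemicontinuous.moreauSupEnv,
    hφconv.eConvexFn_moreauSupEnv, fun x => ?_⟩
  rw [hφ.moreauEnv_moreauSupEnv hR, ← hg_coe, ← hh_coe]
  rfl
end
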